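/- For all positive integers s > 1 and t, A(s-1,t) ≤ t·C(s,t) < A(s,t+1). -/

import Mathlib

/-!
Both bounds go by induction on `s`, with an inner induction on `t` that unfolds one step of the
recursions. The lower bound is strengthened to `A(s,t) ≤ C(s+1,t)` for `s ≥ 2`: in
`A(s+1,t+1) = A(s, A(s+1,t)) ≤ A(s, c)` with `c = C(s+2,t)`, the lower bound one level down gives
`A(s,c) ≤ c · C(s+1,c) = C(s+2,t+1)`. The upper bound is strengthened to
`2^t · C(s,t) ≤ A(s,t+1)`: for `s ≥ 2` the map `A(s,·)` at least doubles at each step, so a factor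
`2^k` in front of `A(s,·)` is absorbed by shifting its argument by `k`.
-/

/-- The Ackermann function of the paper, defined for positive integers `s, t`:
`A(1,t) = 2t`, `A(s,1) = 2`, and `A(s,t) = A(s-1, A(s,t-1))` for `s, t > 1`.
(The value at arguments equal to `0` is junk.) -/
def A : ℕ → ℕ → ℕ
  | 0, _ => 0
  | 1, t => 2 * t
  | _+2, 0 => 0
  | _+2, 1 => 2
  | s+2, t+2 => A (s+1) (A (s+2) (t+1))
termination_by s t => (s, t)

/-- The function `C` of Füredi and Hajnal, defined for positive integers `s, t`:
`C(1,t) = 1`, `C(s,1) = 2` for `s > 1`, and `C(s,t) = C(s,t-1) * C(s-1, C(s,t-1))` for `s, t > 1`.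
(The value at arguments equal to `0` is junk.) -/
def C : ℕ → ℕ → ℕ
  | 0, _ => 0
  | 1, _ => 1
  | _+2, 0 => 0
  | _+2, 1 => 2
  | s+2, t+2 => C (s+2) (t+1) * C (s+1) (C (s+2) (t+1))
termination_by s t => (s, t)

lemma A_one_left (t : ℕ) : A 1 t = 2 * t := by
  simp [A]

lemma A_one_right {s : ℕ} (hs : 1 ≤ s) : A s 1 = 2 := by
  obtain _ | _ | s := s <;> simp_all [A]

lemma A_succ_succ {s t : ℕ} (hs : 1 ≤ s) (ht : 1 ≤ t) :
    A (s + 1) (t + 1) = A s (A (s + 1) t) := by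
  obtain ⟨s, rfl⟩ := Nat.exists_eq_add_of_le' hs
  obtain ⟨t, rfl⟩ := Nat.exists_eq_add_of_le' ht
  rw [A]

lemma C_one_left (t : ℕ) : C 1 t = 1 := by
  simp [C]

lemma C_one_right {s : ℕ} (hs : 2 ≤ s) : C s 1 = 2 := by
  obtain ⟨s, rfl⟩ := Nat.exists_eq_add_of_le' hs
  simp [C]

lemma C_succ_succ {s t : ℕ} (hs : 1 ≤ s) (ht : 1 ≤ t) :
    C (s + 1) (t + 1) = C (s + 1) t * C s (C (s + 1) t) := by
  obtain ⟨s, rfl⟩ := Nat.exists_eq_add_of_le' hs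
  obtain ⟨t, rfl⟩ := Nat.exists_eq_add_of_le' ht
  rw [C]

lemma C_pos {s t : ℕ} (hs : 1 ≤ s) (ht : 1 ≤ t) : 0 < C s t := by
  induction s, hs using Nat.le_induction generalizing t with
  | base => simp [C_one_left]
  | succ s hs ih =>
    induction t, ht using Nat.le_induction with
    | base => simp [C_one_right (by omega : 2 ≤ s + 1)]
    | succ t ht iht =>
      rw [C_succ_succ hs ht]
      exact Nat.mul_pos iht (ih iht)

lemma two_le_C {s t : ℕ} (hs : 2 ≤ s) (ht : 1 ≤ t) : 2 ≤ C s t := by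
  induction t, ht using Nat.le_induction with
  | base => simp [C_one_right hs]
  | succ t ht iht =>
    obtain ⟨s, rfl⟩ := Nat.exists_eq_add_of_le' (by omega : 1 ≤ s)
    rw [C_succ_succ (by omega) ht]
    exact iht.trans (Nat.le_mul_of_pos_right _ (C_pos (by omega) (by omega)))

lemma C_two {t : ℕ} (ht : 1 ≤ t) : C 2 t = 2 := by
  induction t, ht using Nat.le_induction with
  | base => exact C_one_right le_rfl
  | succ t ht iht => rw [C_succ_succ le_rfl ht, iht, C_one_left]

lemma two_mul_le_A {s t : ℕ} (hs : 1 ≤ s) (ht : 1 ≤ t) : 2 * t ≤ A s t := by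
  induction s, hs using Nat.le_induction generalizing t with
  | base => rw [A_one_left]
  | succ s hs ih =>
    induction t, ht using Nat.le_induction with
    | base => rw [A_one_right (by omega)]
    | succ t ht iht =>
      rw [A_succ_succ hs ht]
      have := ih (t := A (s + 1) t) (by omega)
      omega

lemma two_mul_A_le_A_succ {s t : ℕ} (hs : 2 ≤ s) (ht : 1 ≤ t) : 2 * A s t ≤ A s (t + 1) := by
  obtain ⟨s, rfl⟩ := Nat.exists_eq_add_of_le' (by omega : 1 ≤ s)
  have hA := two_mul_le_A (by omega : 1 ≤ s + 1) ht
  rw [A_succ_succ (by omega) ht]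
  exact two_mul_le_A (by omega) (by omega)

lemma A_monotoneOn {s : ℕ} (hs : 1 ≤ s) : MonotoneOn (A s) (Set.Ici 1) := by
  refine monotoneOn_nat_Ici_of_le_succ fun t ht => ?_
  rcases hs.eq_or_lt with rfl | hs
  · simp only [A_one_left]; omega
  · have := two_mul_A_le_A_succ hs ht
    omega

lemma two_pow_mul_A_le_A_add {s t : ℕ} (hs : 2 ≤ s) (ht : 1 ≤ t) (k : ℕ) :
    2 ^ k * A s t ≤ A s (t + k) := by
  induction k with
  | zero => simp
  | succ k ih =>
    calc 2 ^ (k + 1) * A s t = 2 * (2 ^ k * A s t) := by ring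
      _ ≤ 2 * A s (t + k) := by omega
      _ ≤ A s (t + (k + 1)) := two_mul_A_le_A_succ hs (by omega)

lemma A_succ_le_C_succ_succ {s : ℕ} (hs : 1 ≤ s)
    (hlow : ∀ c, 1 ≤ c → A s c ≤ c * C (s + 1) c) {t : ℕ} (ht : 1 ≤ t) :
    A (s + 1) t ≤ C (s + 2) t := by
  induction t, ht using Nat.le_induction with
  | base => rw [A_one_right (by omega), C_one_right (by omega)]
  | succ t ht iht =>
    have hA : 1 ≤ A (s + 1) t := (two_mul_le_A (by omega) ht).trans' (by omega)
    have hC : 1 ≤ C (s + 2) t := C_pos (by omega) ht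
    rw [A_succ_succ hs ht, C_succ_succ (by omega) ht]
    calc A s (A (s + 1) t) ≤ A s (C (s + 2) t) := A_monotoneOn hs hA hC iht
      _ ≤ C (s + 2) t * C (s + 1) (C (s + 2) t) := hlow _ hC

lemma A_le_mul_C_succ {s t : ℕ} (hs : 1 ≤ s) (ht : 1 ≤ t) : A s t ≤ t * C (s + 1) t := by
  induction s, hs using Nat.le_induction generalizing t with
  | base => rw [A_one_left, C_two ht, mul_comm]
  | succ s hs ih =>
    calc A (s + 1) t ≤ C (s + 2) t := A_succ_le_C_succ_succ hs (fun _ hc => ih hc) ht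
      _ ≤ t * C (s + 2) t := Nat.le_mul_of_pos_left _ ht

lemma two_pow_mul_C_le_A_succ {s t : ℕ} (hs : 2 ≤ s) (ht : 1 ≤ t) :
    2 ^ t * C s t ≤ A s (t + 1) := by
  induction s, hs using Nat.le_induction generalizing t with
  | base =>
    calc 2 ^ t * C 2 t = 2 ^ t * A 2 1 := by rw [C_two ht, A_one_right (by norm_num)]
      _ ≤ A 2 (1 + t) := two_pow_mul_A_le_A_add le_rfl le_rfl t
      _ = A 2 (t + 1) := by rw [add_comm]
  | succ s hs ih =>
    induction t, ht using Nat.le_induction with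
    | base =>
      rw [C_one_right (by omega), A_succ_succ (by omega) le_rfl, A_one_right (by omega)]
      exact two_mul_le_A (by omega) (by omega)
    | succ t ht iht =>
      set c := C (s + 1) t
      have hc : 2 ≤ c := two_le_C (by omega) ht
      have h2c : 2 * c ≤ 2 ^ c := by
        have := (c - 1).lt_two_pow_self
        rw [show c = c - 1 + 1 by omega, pow_succ]
        omega
      have hct : c + 1 + t ≤ A (s + 1) (t + 1) := by
        have := t.lt_two_pow_self
        nlinarith
      rw [C_succ_succ (by omega) ht, A_succ_succ (by omega) (by omega)]
      calc 2 ^ (t + 1) * (c * C s c) = 2 ^ t * (2 * c * C s c) := by ring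
        _ ≤ 2 ^ t * (2 ^ c * C s c) := by gcongr
        _ ≤ 2 ^ t * A s (c + 1) := by gcongr; exact ih (by omega)
        _ ≤ A s (c + 1 + t) := two_pow_mul_A_le_A_add hs (by omega) t
        _ ≤ A s (A (s + 1) (t + 1)) :=
          A_monotoneOn (by omega) (by omega : 1 ≤ c + 1 + t) (by omega : 1 ≤ A (s + 1) (t + 1))
            hct

/-- Lemma (inverse-ackermann): for all positive integers `s > 1` and `t`,
`A(s-1,t) ≤ t * C(s,t) < A(s,t+1)`. -/
theorem ackermann_le_mul_C_lt (s t : ℕ) (hs : 1 < s) (ht : 0 < t) :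
    A (s - 1) t ≤ t * C s t ∧ t * C s t < A s (t + 1) := by
  constructor
  · obtain ⟨r, rfl⟩ : ∃ r, s = r + 1 := ⟨s - 1, by omega⟩
    exact A_le_mul_C_succ (by omega) ht
  · calc t * C s t < 2 ^ t * C s t :=
          Nat.mul_lt_mul_of_pos_right t.lt_two_pow_self (C_pos (by omega) ht)
      _ ≤ A s (t + 1) := two_pow_mul_C_le_A_succ hs ht
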